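/- Let B, u be smooth time-dependent vector fields on ℝ³ with ∇·B = 0 and ∂B/∂t − ∇×(u×B) = 0, and let φ be a smooth scalar field. Then ∂(B·∇φ)/∂t + ∇·[(B·∇φ)u − B (∂φ/∂t + u·∇φ)] = 0. -/

import Mathlib

open scoped BigOperators
open MeasureTheory

noncomputable section

abbrev V3 : Type := Fin 3 → ℝ

/-- Partial derivative of a scalar field in coordinate direction `i`. -/
noncomputable def pd (f : V3 → ℝ) (i : Fin 3) (x : V3) : ℝ :=
  fderiv ℝ f x (Pi.single i 1)

/-- Gradient of a scalar field on ℝ³. -/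
noncomputable def grad3 (f : V3 → ℝ) (x : V3) : V3 := fun i => pd f i x

/-- Divergence of a vector field on ℝ³. -/
noncomputable def div3 (F : V3 → V3) (x : V3) : ℝ := ∑ i, pd (fun y => F y i) i x

/-- Curl of a vector field on ℝ³. -/
noncomputable def curl3 (F : V3 → V3) (x : V3) : V3 :=
  ![pd (fun y => F y 2) 1 x - pd (fun y => F y 1) 2 x,
    pd (fun y => F y 0) 2 x - pd (fun y => F y 2) 0 x,
    pd (fun y => F y 1) 0 x - pd (fun y => F y 0) 1 x]

/-- Cross product in ℝ³. -/
def cross3 (a b : V3) : V3 :=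
  ![a 1 * b 2 - a 2 * b 1, a 2 * b 0 - a 0 * b 2, a 0 * b 1 - a 1 * b 0]

/-- Dot product in ℝ³. -/
def dot3 (a b : V3) : ℝ := ∑ i, a i * b i

/-- Advective derivative (F·∇)G of a vector field G along F. -/
noncomputable def advD (F G : V3 → V3) (x : V3) : V3 :=
  fun j => ∑ i, F x i * pd (fun y => G y j) i x

/-- Time partial derivative of a time-dependent vector field. -/
noncomputable def dtV (F : ℝ → V3 → V3) (t : ℝ) (x : V3) : V3 :=
  fun i => deriv (fun s => F s x i) t

/-- Time partial derivative of a time-dependent scalar field. -/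
noncomputable def dtS (f : ℝ → V3 → ℝ) (t : ℝ) (x : V3) : ℝ :=
  deriv (fun s => f s x) t

/-- Smooth time-dependent vector field. -/
def SmoothTV (F : ℝ → V3 → V3) : Prop := ContDiff ℝ (⊤ : ℕ∞) (Function.uncurry F)

/-- Smooth time-dependent scalar field. -/
def SmoothTS (f : ℝ → V3 → ℝ) : Prop := ContDiff ℝ (⊤ : ℕ∞) (Function.uncurry f)

/-- Smooth (static) vector field. -/
def SmoothV (F : V3 → V3) : Prop := ContDiff ℝ (⊤ : ℕ∞) F

/-- Smooth (static) scalar field. -/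
def SmoothS (f : V3 → ℝ) : Prop := ContDiff ℝ (⊤ : ℕ∞) f

/-! With `∇·B = 0` the induction equation reads `∂B/∂t = (B·∇)u - (u·∇)B - (∇·u) B`.
Expanding the flux by the product rule, the `∂φ/∂t` terms cancel because time and space
derivatives of `φ` commute, and the rest of the flux divergence is
`(B·∇φ)(∇·u) + u·∇(B·∇φ) - B·∇(u·∇φ) = ((∇·u) B + (u·∇)B - (B·∇)u)·∇φ`, the second-derivative
terms cancelling by symmetry of the Hessian of `φ`: this is exactly `-(∂B/∂t)·∇φ`. -/

section General

variable {E F : Type*} [NormedAddCommGroup E] [NormedSpace ℝ E]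
  [NormedAddCommGroup F] [NormedSpace ℝ F]

lemma fderiv_fderiv_apply {f : E → F} {x : E} (hf : DifferentiableAt ℝ (fderiv ℝ f) x)
    (v w : E) : fderiv ℝ (fun y => fderiv ℝ f y v) x w = fderiv ℝ (fderiv ℝ f) x w v := by
  simp [fderiv_clm_apply hf (differentiableAt_const v)]

lemma fderiv_fderiv_apply_comm {f : E → F} {x : E} (hf : ContDiffAt ℝ 2 f x) (v w : E) :
    fderiv ℝ (fun y => fderiv ℝ f y v) x w = fderiv ℝ (fun y => fderiv ℝ f y w) x v := by
  have hdf : DifferentiableAt ℝ (fderiv ℝ f) x :=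
    (hf.fderiv_right (m := 1) le_rfl).differentiableAt one_ne_zero
  rw [fderiv_fderiv_apply hdf, fderiv_fderiv_apply hdf,
    (hf.isSymmSndFDerivAt (by simp [minSmoothness_of_isRCLikeNormedField])).eq]

lemma hasDerivAt_comp_prodMk {Ψ : ℝ × E → F} {t : ℝ} {x : E}
    (hΨ : DifferentiableAt ℝ Ψ (t, x)) :
    HasDerivAt (fun s => Ψ (s, x)) (fderiv ℝ Ψ (t, x) (1, 0)) t :=
  hΨ.hasFDerivAt.comp_hasDerivAt t ((hasDerivAt_id t).prodMk (hasDerivAt_const t x))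

end General

section Static

variable {f g : V3 → ℝ} {F G : V3 → V3} {x : V3}

lemma pd_add (hf : DifferentiableAt ℝ f x) (hg : DifferentiableAt ℝ g x) (i : Fin 3) :
    pd (fun y => f y + g y) i x = pd f i x + pd g i x := by
  simp [pd, fderiv_fun_add hf hg]

lemma pd_sub (hf : DifferentiableAt ℝ f x) (hg : DifferentiableAt ℝ g x) (i : Fin 3) :
    pd (fun y => f y - g y) i x = pd f i x - pd g i x := by
  simp [pd, fderiv_fun_sub hf hg]

lemma pd_mul (hf : DifferentiableAt ℝ f x) (hg : DifferentiableAt ℝ g x) (i : Fin 3) :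
    pd (fun y => f y * g y) i x = pd f i x * g x + f x * pd g i x := by
  simp only [pd, fderiv_fun_mul hf hg, add_apply, smul_apply, smul_eq_mul]
  ring

lemma pd_sum {ι : Type*} {s : Finset ι} {f : ι → V3 → ℝ}
    (hf : ∀ k ∈ s, DifferentiableAt ℝ (f k) x) (i : Fin 3) :
    pd (fun y => ∑ k ∈ s, f k y) i x = ∑ k ∈ s, pd (f k) i x := by
  simp [pd, fderiv_fun_sum hf]

lemma pd_dot3 (hF : DifferentiableAt ℝ F x) (hG : DifferentiableAt ℝ G x) (i : Fin 3) :
    pd (fun y => dot3 (F y) (G y)) i x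
      = ∑ k, (pd (fun y => F y k) i x * G x k + F x k * pd (fun y => G y k) i x) := by
  have hFk := differentiableAt_pi.1 hF
  have hGk := differentiableAt_pi.1 hG
  simp only [dot3]
  rw [pd_sum (f := fun k y => F y k * G y k) fun k _ => (hFk k).mul (hGk k)]
  exact Finset.sum_congr rfl fun k _ => pd_mul (hFk k) (hGk k) i

lemma pd_pd_comm (hf : ContDiffAt ℝ 2 f x) (i j : Fin 3) :
    pd (pd f j) i x = pd (pd f i) j x :=
  fderiv_fderiv_apply_comm hf _ _

lemma ContDiffAt.differentiableAt_pd (hf : ContDiffAt ℝ 2 f x) (i : Fin 3) :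
    DifferentiableAt ℝ (pd f i) x :=
  ((hf.fderiv_right (m := 1) le_rfl).differentiableAt one_ne_zero).clm_apply
    (differentiableAt_const _)

def hess3 (f : V3 → ℝ) (x a b : V3) : ℝ := ∑ i, ∑ j, a i * b j * pd (pd f j) i x

lemma hess3_comm (hf : ContDiffAt ℝ 2 f x) (a b : V3) : hess3 f x a b = hess3 f x b a := by
  rw [hess3, hess3, Finset.sum_comm]
  refine Finset.sum_congr rfl fun i _ => Finset.sum_congr rfl fun j _ => ?_
  rw [pd_pd_comm hf]
  ring

lemma dot3_grad3_add (hf : DifferentiableAt ℝ f x) (hg : DifferentiableAt ℝ g x) (a : V3) :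
    dot3 a (grad3 (fun y => f y + g y) x) = dot3 a (grad3 f x) + dot3 a (grad3 g x) := by
  simp only [dot3, grad3, pd_add hf hg, mul_add, Finset.sum_add_distrib]

lemma dot3_grad3_dot3_grad3 (H : V3 → V3) (hF : DifferentiableAt ℝ F x)
    (hf : ContDiffAt ℝ 2 f x) :
    dot3 (H x) (grad3 (fun y => dot3 (F y) (grad3 f y)) x)
      = dot3 (advD H F x) (grad3 f x) + hess3 f x (H x) (F x) := by
  have h : ∀ i, grad3 (fun y => dot3 (F y) (grad3 f y)) x i
      = ∑ k, (pd (fun y => F y k) i x * grad3 f x k + F x k * pd (pd f k) i x) :=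
    pd_dot3 hF (differentiableAt_pi.2 hf.differentiableAt_pd)
  rw [dot3]
  simp only [h]
  simp only [dot3, grad3, advD, hess3, Fin.sum_univ_three]
  ring

lemma div3_sub (hF : DifferentiableAt ℝ F x) (hG : DifferentiableAt ℝ G x) :
    div3 (fun y => F y - G y) x = div3 F x - div3 G x := by
  simp only [div3, ← Finset.sum_sub_distrib]
  exact Finset.sum_congr rfl fun i _ =>
    pd_sub (differentiableAt_pi.1 hF i) (differentiableAt_pi.1 hG i) i

lemma div3_smul (hg : DifferentiableAt ℝ g x) (hF : DifferentiableAt ℝ F x) :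
    div3 (fun y => g y • F y) x = dot3 (F x) (grad3 g x) + g x * div3 F x := by
  simp only [div3, dot3, grad3, Finset.mul_sum, ← Finset.sum_add_distrib]
  refine Finset.sum_congr rfl fun i _ => ?_
  rw [show (fun y => (g y • F y) i) = fun y => g y * F y i from rfl,
    pd_mul hg (differentiableAt_pi.1 hF i)]
  ring

lemma curl3_cross {u B : V3 → V3} (hu : DifferentiableAt ℝ u x) (hB : DifferentiableAt ℝ B x) :
    curl3 (fun y => cross3 (u y) (B y)) x
      = div3 B x • u x - div3 u x • B x + advD B u x - advD u B x := by
  have hu' := differentiableAt_pi.1 hu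
  have hB' := differentiableAt_pi.1 hB
  ext j
  fin_cases j <;>
  simp [curl3, cross3, div3, advD, Fin.sum_univ_three, pd_sub, pd_mul, hu', hB'] <;>
  ring

end Static

section Regularity

variable {m n : WithTop ℕ∞} {f : V3 → ℝ} {F G : V3 → V3}

lemma ContDiff.pd (hf : ContDiff ℝ n f) (hmn : m + 1 ≤ n) (i : Fin 3) :
    ContDiff ℝ m (pd f i) :=
  (hf.fderiv_right hmn).clm_apply contDiff_const

lemma ContDiff.grad3 (hf : ContDiff ℝ n f) (hmn : m + 1 ≤ n) : ContDiff ℝ m (grad3 f) :=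
  contDiff_pi.2 fun i => hf.pd hmn i

lemma ContDiff.dot3 (hF : ContDiff ℝ n F) (hG : ContDiff ℝ n G) :
    ContDiff ℝ n (fun y => dot3 (F y) (G y)) :=
  ContDiff.sum fun i _ => (contDiff_pi.1 hF i).mul (contDiff_pi.1 hG i)

end Regularity

section TimeDependent

variable {φ : ℝ → V3 → ℝ} {B : ℝ → V3 → V3} {t : ℝ} {x : V3} {m n : WithTop ℕ∞}

lemma pd_comp_prodMk {E : Type*} [NormedAddCommGroup E] [NormedSpace ℝ E] {Ψ : E × V3 → ℝ}
    {e : E} (hΨ : DifferentiableAt ℝ Ψ (e, x)) (i : Fin 3) :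
    pd (fun y => Ψ (e, y)) i x = fderiv ℝ Ψ (e, x) (0, Pi.single i 1) := by
  have h : HasFDerivAt (fun y => Ψ (e, y))
      ((fderiv ℝ Ψ (e, x)).comp (ContinuousLinearMap.inr ℝ E V3)) x :=
    hΨ.hasFDerivAt.comp x (hasFDerivAt_prodMk_right e x)
  simp [pd, h.fderiv]

lemma dtS_eq_fderiv_uncurry (hφ : Differentiable ℝ (Function.uncurry φ)) (t : ℝ) :
    dtS φ t = fun y => fderiv ℝ (Function.uncurry φ) (t, y) (1, 0) :=
  funext fun y => (hasDerivAt_comp_prodMk (hφ (t, y))).deriv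

lemma contDiff_dtS (hφ : ContDiff ℝ n (Function.uncurry φ)) (hmn : m + 1 ≤ n) (t : ℝ) :
    ContDiff ℝ m (dtS φ t) := by
  have hΦ : Differentiable ℝ (Function.uncurry φ) :=
    hφ.differentiable (by rintro rfl; simp at hmn)
  rw [dtS_eq_fderiv_uncurry hΦ]
  exact ((hφ.fderiv_right hmn).comp (contDiff_prodMk_right t)).clm_apply contDiff_const

lemma hasDerivAt_pd (hφ : ContDiff ℝ 2 (Function.uncurry φ)) (i : Fin 3) :
    HasDerivAt (fun s => pd (φ s) i x) (pd (dtS φ t) i x) t := by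
  have hΦ : Differentiable ℝ (Function.uncurry φ) := hφ.differentiable two_ne_zero
  have hdΦ : Differentiable ℝ (fderiv ℝ (Function.uncurry φ)) :=
    (hφ.fderiv_right (m := 1) le_rfl).differentiable one_ne_zero
  have hspace : (fun s => pd (φ s) i x)
      = fun s => fderiv ℝ (Function.uncurry φ) (s, x) (0, Pi.single i 1) :=
    funext fun s => pd_comp_prodMk (hΦ _) i
  have hmixed : pd (dtS φ t) i x
      = fderiv ℝ (fun p => fderiv ℝ (Function.uncurry φ) p (0, Pi.single i 1)) (t, x) (1, 0) := by
    rw [dtS_eq_fderiv_uncurry hΦ, pd_comp_prodMk ((hdΦ _).clm_apply (differentiableAt_const _)) i,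
      fderiv_fderiv_apply_comm hφ.contDiffAt]
  rw [hspace, hmixed]
  exact hasDerivAt_comp_prodMk ((hdΦ _).clm_apply (differentiableAt_const _))

lemma dtS_dot3_grad3 (hB : Differentiable ℝ (Function.uncurry B))
    (hφ : ContDiff ℝ 2 (Function.uncurry φ)) :
    dtS (fun s y => dot3 (B s y) (grad3 (φ s) y)) t x
      = dot3 (dtV B t x) (grad3 (φ t) x) + dot3 (B t x) (grad3 (dtS φ t) x) := by
  have hBi : ∀ i, HasDerivAt (fun s => B s x i) (dtV B t x i) t := fun i =>
    (hasDerivAt_comp_prodMk (differentiableAt_pi.1 (hB (t, x)) i)).differentiableAt.hasDerivAt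
  have h : HasDerivAt (fun s => dot3 (B s x) (grad3 (φ s) x))
      (∑ i, (dtV B t x i * grad3 (φ t) x i + B t x i * grad3 (dtS φ t) x i)) t :=
    HasDerivAt.fun_sum fun i _ => (hBi i).mul (hasDerivAt_pd hφ i)
  rw [dtS, h.deriv, Finset.sum_add_distrib]
  rfl

end TimeDependent

theorem faraday_potential_conservation_law
    (B u : ℝ → V3 → V3) (φ : ℝ → V3 → ℝ)
    (hB : SmoothTV B) (hu : SmoothTV u) (hφ : SmoothTS φ)
    (hdivB : ∀ t x, div3 (B t) x = 0)
    (hFar : ∀ t x, dtV B t x - curl3 (fun y => cross3 (u t y) (B t y)) x = 0) :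
    ∀ t x, dtS (fun s y => dot3 (B s y) (grad3 (φ s) y)) t x
      + div3 (fun y => dot3 (B t y) (grad3 (φ t) y) • u t y
          - (dtS φ t y + dot3 (u t y) (grad3 (φ t) y)) • B t y) x = 0 := by
  intro t x
  have hdiff {G : Type} [NormedAddCommGroup G] [NormedSpace ℝ G] {F : V3 → G}
      (hF : ContDiff ℝ (⊤ : ℕ∞) F) : DifferentiableAt ℝ F x := hF.differentiable (by simp) x
  have hBt : ContDiff ℝ (⊤ : ℕ∞) (B t) := hB.comp (contDiff_prodMk_right t)
  have hut : ContDiff ℝ (⊤ : ℕ∞) (u t) := hu.comp (contDiff_prodMk_right t)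
  have hφt : ContDiff ℝ (⊤ : ℕ∞) (φ t) := hφ.comp (contDiff_prodMk_right t)
  have hφ2 : ContDiffAt ℝ 2 (φ t) x := (hφt.of_le (WithTop.coe_le_coe.2 le_top)).contDiffAt
  have hφ't : ContDiff ℝ (⊤ : ℕ∞) (dtS φ t) := contDiff_dtS hφ (by simp) t
  have hψ : ContDiff ℝ (⊤ : ℕ∞) (fun y => dot3 (B t y) (grad3 (φ t) y)) :=
    hBt.dot3 (hφt.grad3 (by simp))
  have hw : ContDiff ℝ (⊤ : ℕ∞) (fun y => dot3 (u t y) (grad3 (φ t) y)) :=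
    hut.dot3 (hφt.grad3 (by simp))
  have hdtB : dtV B t x
      = -(div3 (u t) x • B t x) + advD (B t) (u t) x - advD (u t) (B t) x := by
    rw [sub_eq_zero.1 (hFar t x), curl3_cross (hdiff hut) (hdiff hBt), hdivB, zero_smul,
      zero_sub]
  rw [dtS_dot3_grad3 (hB.differentiable (by simp)) (hφ.of_le (WithTop.coe_le_coe.2 le_top)),
    div3_sub (hdiff (hψ.fun_smul hut)) (hdiff ((hφ't.add hw).fun_smul hBt)),
    div3_smul (hdiff hψ) (hdiff hut), div3_smul (hdiff (hφ't.add hw)) (hdiff hBt),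
    dot3_grad3_add (hdiff hφ't) (hdiff hw),
    dot3_grad3_dot3_grad3 _ (hdiff hBt) hφ2, dot3_grad3_dot3_grad3 _ (hdiff hut) hφ2,
    hess3_comm hφ2 (u t x), hdtB, hdivB]
  simp only [dot3, Fin.sum_univ_three, Pi.add_apply, Pi.sub_apply, Pi.neg_apply, Pi.smul_apply,
    smul_eq_mul]
  ring
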